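/- arXiv:1207.4721 — 5 statements merged into one kernel-verified Lean document; each statement's English description precedes it below -/
import Mathlib

section
/- Let R be a difference ring with translation σ and S ⊆ R. Define S^[0] = S and S^[n] = ([S^[n-1]])', where [A] denotes the σ-ideal generated by A and A' = {a·σ(b) | ab ∈ A}. Then the union of the S^[n] over all n ≥ 0 equals the smallest mixed difference ideal ⟨S⟩ containing S. -/
/-- `I` is a difference (σ-) ideal: an ideal closed under σ. -/
def IsSigmaIdeal {R : Type*} [CommRing R] (σ : R →+* R) (I : Ideal R) : Prop :=
  ∀ a ∈ I, σ a ∈ I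

/-- `I` is a mixed difference ideal: a σ-ideal such that `a*b ∈ I` implies `a*σ(b) ∈ I`. -/
def IsMixedIdeal {R : Type*} [CommRing R] (σ : R →+* R) (I : Ideal R) : Prop :=
  IsSigmaIdeal σ I ∧ ∀ a b : R, a * b ∈ I → a * σ b ∈ I

/-- The σ-ideal generated by a set `S`: the ideal generated by all transforms of elements
of `S`. -/
def sigmaSpan {R : Type*} [CommRing R] (σ : R →+* R) (S : Set R) : Ideal R :=
  Ideal.span {x | ∃ a ∈ S, ∃ k : ℕ, x = (⇑σ)^[k] a}

/-- The smallest mixed difference ideal containing `S`. -/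
def mixedSpan {R : Type*} [CommRing R] (σ : R →+* R) (S : Set R) : Ideal R :=
  sInf {I : Ideal R | IsMixedIdeal σ I ∧ S ⊆ I}

/-- `A' = {a·σ(b) | a*b ∈ A}`. -/
def primeSet {R : Type*} [CommRing R] (σ : R →+* R) (A : Set R) : Set R :=
  {x | ∃ a b : R, a * b ∈ A ∧ x = a * σ b}

/-- The shuffling process: `S^[0] = S`, `S^[n] = ([S^[n-1]])'`. -/
def shuffle {R : Type*} [CommRing R] (σ : R →+* R) (S : Set R) : ℕ → Set R
  | 0 => S
  | n + 1 => primeSet σ (sigmaSpan σ (shuffle σ S n) : Set R)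

section Aux
variable {R : Type*} [CommRing R] (σ : R →+* R) (S : Set R)

lemma sigmaSpan_mono {A B : Set R} (h : A ⊆ B) : sigmaSpan σ A ≤ sigmaSpan σ B :=
  Ideal.span_mono (fun x ⟨a, ha, k, hk⟩ => ⟨a, h ha, k, hk⟩)

lemma subset_sigmaSpan (A : Set R) : A ⊆ (sigmaSpan σ A : Set R) :=
  fun a ha => Ideal.subset_span ⟨a, ha, 0, rfl⟩

lemma sigmaSpan_sigma (A : Set R) : IsSigmaIdeal σ (sigmaSpan σ A) := by
  intro a ha
  have : σ a ∈ Ideal.map σ (sigmaSpan σ A) := Ideal.mem_map_of_mem σ ha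
  rw [sigmaSpan, Ideal.map_span] at this
  refine Ideal.span_mono ?_ this
  rintro x ⟨y, ⟨a, ha, k, rfl⟩, rfl⟩
  exact ⟨a, ha, k + 1, (Function.iterate_succ_apply' _ _ _).symm⟩

lemma subset_primeSet (A : Ideal R) : (A : Set R) ⊆ primeSet σ A := by
  intro x hx
  exact ⟨x, 1, by simpa using hx, by simp⟩

lemma shuffle_subset_succ (n : ℕ) : shuffle σ S n ⊆ shuffle σ S (n + 1) :=
  fun x hx => subset_primeSet σ _ (subset_sigmaSpan σ _ hx)

lemma shuffle_subset_mixed {I : Ideal R} (hI : IsMixedIdeal σ I) (hS : S ⊆ I) :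
    ∀ n, shuffle σ S n ⊆ I := by
  intro n
  induction n with
  | zero => exact hS
  | succ n ih =>
    rintro x ⟨a, b, hab, rfl⟩
    refine hI.2 a b ?_
    have hspan : sigmaSpan σ (shuffle σ S n) ≤ I := by
      refine Ideal.span_le.2 ?_
      rintro x ⟨a, ha, k, rfl⟩
      induction k with
      | zero => exact ih ha
      | succ k ihk =>
        rw [Function.iterate_succ_apply']
        exact hI.1 _ ihk
    exact hspan hab

end Aux

theorem stmt_1 {R : Type*} [CommRing R] (σ : R →+* R) (hσ : Function.Injective σ)
    (S : Set R) :
    (⋃ n : ℕ, shuffle σ S n) = (mixedSpan σ S : Set R) := by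
  have hmono : Monotone (fun n => sigmaSpan σ (shuffle σ S n)) :=
    monotone_nat_of_le_succ fun n =>
      sigmaSpan_mono σ (shuffle_subset_succ σ S n)
  set J : Ideal R := ⨆ n, sigmaSpan σ (shuffle σ S n) with hJ
  have hJcoe : (J : Set R) = ⋃ n, (sigmaSpan σ (shuffle σ S n) : Set R) :=
    Submodule.coe_iSup_of_chain ⟨fun n => sigmaSpan σ (shuffle σ S n), hmono⟩
  have hmemJ : ∀ x, x ∈ J ↔ ∃ n, x ∈ sigmaSpan σ (shuffle σ S n) := by
    intro x
    rw [← SetLike.mem_coe, hJcoe]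
    simp
  have hUJ : (⋃ n : ℕ, shuffle σ S n) = (J : Set R) := by
    rw [hJcoe]
    apply Set.Subset.antisymm
    · exact Set.iUnion_mono fun n => subset_sigmaSpan σ _
    · refine Set.iUnion_subset fun n => ?_
      intro x hx
      exact Set.mem_iUnion.2 ⟨n + 1, subset_primeSet σ _ hx⟩
  have hJmixed : IsMixedIdeal σ J := by
    constructor
    · intro a ha
      obtain ⟨n, hn⟩ := (hmemJ a).1 ha
      exact (hmemJ _).2 ⟨n, sigmaSpan_sigma σ _ a hn⟩
    · intro a b hab
      obtain ⟨n, hn⟩ := (hmemJ _).1 hab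
      refine (hmemJ _).2 ⟨n + 1, subset_sigmaSpan σ _ ?_⟩
      exact ⟨a, b, hn, rfl⟩
  have hSJ : S ⊆ J := fun s hs =>
    (hmemJ s).2 ⟨0, subset_sigmaSpan σ _ hs⟩
  rw [hUJ]
  apply Set.Subset.antisymm
  · intro x hx
    obtain ⟨n, hn⟩ := (hmemJ x).1 hx
    rw [SetLike.mem_coe, mixedSpan, Ideal.mem_sInf]
    rintro I ⟨hI, hSI⟩
    have : sigmaSpan σ (shuffle σ S n) ≤ I := by
      refine Ideal.span_le.2 ?_
      rintro x ⟨a, ha, k, rfl⟩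
      induction k with
      | zero => exact shuffle_subset_mixed σ S hI hSI n ha
      | succ k ihk =>
        rw [Function.iterate_succ_apply']
        exact hI.1 _ ihk
    exact this hn
  · exact fun x hx => (Ideal.mem_sInf.1 hx) ⟨hJmixed, hSJ⟩
end

section
/- If I is a mixed reflexive difference ideal of a difference ring R, then the radical of I is a perfect difference ideal of R. -/
/-- A σ-ideal is reflexive if `σ(a) ∈ I` implies `a ∈ I`. -/
def IsReflexiveIdeal {R : Type*} [CommRing R] (σ : R →+* R) (I : Ideal R) : Prop :=
  ∀ a : R, σ a ∈ I → a ∈ I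

def IsPerfectIdeal {R : Type*} [CommRing R] (σ : R →+* R) (I : Ideal R) : Prop :=
  IsSigmaIdeal σ I ∧ ∀ (a : R) (m : ℕ) (k d : Fin (m + 1) → ℕ), (∀ i, 1 ≤ d i) →
    (∏ i, ((⇑σ)^[k i] a) ^ d i) ∈ I → a ∈ I

private lemma step_iff {R : Type*} [CommRing R] (σ : R →+* R)
    (I : Ideal R) (hmixed : IsMixedIdeal σ I) (hrefl : IsReflexiveIdeal σ I)
    (a b : R) : a * σ b ∈ I ↔ a * b ∈ I := by
  constructor
  · intro h
    apply hrefl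
    have := hmixed.2 (σ b) a (by rwa [mul_comm])
    rwa [map_mul, mul_comm]
  · exact hmixed.2 a b

private lemma iter_iff {R : Type*} [CommRing R] (σ : R →+* R)
    (I : Ideal R) (hmixed : IsMixedIdeal σ I) (hrefl : IsReflexiveIdeal σ I)
    (n : ℕ) (a b : R) : a * (⇑σ)^[n] b ∈ I ↔ a * b ∈ I := by
  induction n with
  | zero => simp
  | succ n ih =>
    rw [Function.iterate_succ_apply', step_iff σ I hmixed hrefl, ih]

theorem stmt_4 {R : Type*} [CommRing R] (σ : R →+* R) (hσ : Function.Injective σ)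
    (I : Ideal R) (hmixed : IsMixedIdeal σ I) (hrefl : IsReflexiveIdeal σ I) :
    IsPerfectIdeal σ I.radical := by
  constructor
  · intro a ha
    obtain ⟨n, hn⟩ := ha
    exact ⟨n, by rw [← map_pow]; exact hmixed.1 _ hn⟩
  · intro a m k d _ hprod
    obtain ⟨n, hn⟩ := hprod
    rw [← Finset.prod_pow] at hn
    have key : ∀ s : Finset (Fin (m + 1)), ∀ c : R,
        c * ∏ i ∈ s, (((⇑σ)^[k i] a) ^ d i) ^ n ∈ I ↔
        c * ∏ i ∈ s, (a ^ d i) ^ n ∈ I := by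
      intro s
      induction s using Finset.induction with
      | empty => simp
      | @insert j s hj ih =>
        intro c
        rw [Finset.prod_insert hj, Finset.prod_insert hj]
        have hpow : (((⇑σ)^[k j] a) ^ d j) ^ n = (⇑σ)^[k j] ((a ^ d j) ^ n) := by
          have : (⇑σ)^[k j] = ⇑(σ ^ k j) := by
            rw [RingHom.coe_pow]
          rw [this, map_pow, map_pow]
        rw [hpow,
          show c * ((⇑σ)^[k j] ((a ^ d j) ^ n) * ∏ i ∈ s, (((⇑σ)^[k i] a) ^ d i) ^ n)
              = (c * ∏ i ∈ s, (((⇑σ)^[k i] a) ^ d i) ^ n) * (⇑σ)^[k j] ((a ^ d j) ^ n) by ring,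
          iter_iff σ I hmixed hrefl,
          show (c * ∏ i ∈ s, (((⇑σ)^[k i] a) ^ d i) ^ n) * (a ^ d j) ^ n
              = (c * (a ^ d j) ^ n) * ∏ i ∈ s, (((⇑σ)^[k i] a) ^ d i) ^ n by ring,
          ih (c * (a ^ d j) ^ n), mul_assoc]
    have h2 : (1 : R) * ∏ i, (a ^ d i) ^ n ∈ I :=
      (key Finset.univ 1).mp (by rwa [one_mul])
    rw [one_mul] at h2
    refine ⟨∑ i, d i * n, ?_⟩
    rw [← Finset.prod_pow_eq_pow_sum]
    convert h2 using 2 with i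
    rw [pow_mul]
end

section
/- Let K be an ordinary difference field and K{y} the ring of difference polynomials in one indeterminate. With u^(n) = y_{n+2^n−1} y_{n+2^{n+1}−1} and A^(i) = u^(2i−2) + u^(2i−1) for i ≥ 1, fix m ≥ 1 and let S = {A^(1), …, A^(m)}. Then every homogeneous difference polynomial of degree 2 lying in the difference ideal [S] is irreducible in K{y}. -/
open MvPolynomial

noncomputable def shift {K : Type*} [Field K] (σK : K →+* K) :
    MvPolynomial ℕ K →+* MvPolynomial ℕ K :=
  eval₂Hom (MvPolynomial.C.comp σK) (fun n => MvPolynomial.X (n + 1))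

/-- The term `u⁽ⁿ⁾ = y_{n+2ⁿ−1} · y_{n+2ⁿ⁺¹−1}` in `K{y}`. -/
noncomputable def uPoly (K : Type*) [Field K] (n : ℕ) : MvPolynomial ℕ K :=
  X (n + 2 ^ n - 1) * X (n + 2 ^ (n + 1) - 1)

/-- `A⁽ⁱ⁾ = u⁽²ⁱ⁻²⁾ + u⁽²ⁱ⁻¹⁾` for `i ≥ 1`. -/
noncomputable def APoly (K : Type*) [Field K] (i : ℕ) : MvPolynomial ℕ K :=
  uPoly K (2 * i - 2) + uPoly K (2 * i - 1)

/-!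
Write `σᵏ u⁽ⁿ⁾ = y_a y_{a+2ⁿ}`. These monomials are pairwise distinct, so a homogeneous quadratic
`f ∈ [S]` is supported on them, with equal coefficients on `σᵏ u⁽ⁿ⁾` and `σᵏ u⁽ⁿ⁺¹⁾` for even `n`.
A nontrivial factorisation of `f` is a product `g h` of two linear forms; as `f` has no square
terms, `g` and `h` have disjoint supports and the support of `f` is the complete bipartite graph
between them. Pick an even `n` with `σᵏ u⁽ⁿ⁾ = y_a y_b` and `σᵏ u⁽ⁿ⁺¹⁾ = y_c y_d` in `f`, where
`b = a + 2ⁿ` and `d = a + 3·2ⁿ + 1`: then `y_a y_d` or `y_b y_d` occurs in `f`. But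
`d - b = 2ⁿ⁺¹ + 1` is never a power of two, and `d - a = 3·2ⁿ + 1` is one only for `n = 0`, where
`y_a y_d` would be a shift of `u⁽²⁾`; this is avoided by taking `n ≥ 2` whenever some `σᵏ u⁽ⁿ⁾`
with `n ≥ 2` occurs in `f`.
-/

namespace MvPolynomial

variable {σ R K : Type*}

section CommSemiring

variable [CommSemiring R]

lemma IsHomogeneous.degree_eq_of_coeff_ne_zero {φ : MvPolynomial σ R} {n : ℕ}
    (hφ : φ.IsHomogeneous n) {d : σ →₀ ℕ} (hd : coeff d φ ≠ 0) : d.degree = n := by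
  by_contra h
  exact hd (hφ.coeff_eq_zero h)

lemma isHomogeneous_one_of_totalDegree_le_one {p : MvPolynomial σ R} (hp : p.totalDegree ≤ 1)
    (h0 : constantCoeff p = 0) : p.IsHomogeneous 1 := by
  intro d hd
  have hd0 : d ≠ 0 := by rintro rfl; exact hd h0
  have hle : d.degree ≤ 1 := (le_totalDegree (mem_support_iff.mpr hd)).trans hp
  have hpos : d.degree ≠ 0 := by rwa [Ne, Finsupp.degree_eq_zero_iff]
  have hdeg : d.degree = 1 := by omega
  rwa [Finsupp.degree_eq_weight_one] at hdeg

end CommSemiring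

section Field

variable [Field K]

lemma totalDegree_ne_zero_of_not_isUnit {p : MvPolynomial σ K} (hp0 : p ≠ 0) (hp : ¬IsUnit p) :
    p.totalDegree ≠ 0 := by
  intro hdeg
  refine hp (isUnit_iff_totalDegree_of_isReduced.mpr
    ⟨isUnit_iff_ne_zero.mpr fun h0 => hp0 ?_, hdeg⟩)
  rw [totalDegree_eq_zero_iff_eq_C.mp hdeg, h0, map_zero]

lemma IsHomogeneous.isHomogeneous_one_of_eq_mul {f g h : MvPolynomial σ K}
    (hf : f.IsHomogeneous 2) (hf0 : f ≠ 0) (hfgh : f = g * h) (hg : ¬IsUnit g)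
    (hh : ¬IsUnit h) : g.IsHomogeneous 1 ∧ h.IsHomogeneous 1 := by
  have hg0 : g ≠ 0 := by rintro rfl; simp_all
  have hh0 : h ≠ 0 := by rintro rfl; simp_all
  have hdeg : g.totalDegree + h.totalDegree = 2 := by
    rw [← totalDegree_mul_of_isDomain hg0 hh0, ← hfgh, hf.totalDegree hf0]
  have hgd := totalDegree_ne_zero_of_not_isUnit hg0 hg
  have hhd := totalDegree_ne_zero_of_not_isUnit hh0 hh
  wlog hgc : constantCoeff g = 0 generalizing g h
  · have hconst : constantCoeff g * constantCoeff h = 0 := by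
      rw [← map_mul, ← hfgh, constantCoeff_eq]
      exact hf.coeff_eq_zero (by simp)
    have hhc := (mul_eq_zero.mp hconst).resolve_left hgc
    exact (this (hfgh.trans (mul_comm g h)) hh hg hh0 hg0 (by omega) hhd hgd hhc).symm
  have hg1 : g.IsHomogeneous 1 := isHomogeneous_one_of_totalDegree_le_one (by omega) hgc
  set c := constantCoeff h
  have hh1 : (h - C c).IsHomogeneous 1 := by
    refine isHomogeneous_one_of_totalDegree_le_one ?_ (by simp [c])
    exact (totalDegree_sub_C_le h c).trans (by omega)
  have hcg : C c * g = 0 := by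
    by_contra hne
    have h2 : (C c * g).IsHomogeneous 2 := by
      have : C c * g = f - g * (h - C c) := by rw [hfgh]; ring
      exact this ▸ hf.sub (hg1.mul hh1)
    exact absurd ((hg1.C_mul c).inj_right h2 hne) (by norm_num)
  have hc : c = 0 := by simpa [hg0] using hcg
  exact ⟨hg1, by simpa [hc] using hh1⟩

end Field

section Quadratic

open Finsupp (single)

variable [CommSemiring R]

lemma coeff_mul_monomial_eq_zero_of_degree_eq (p : MvPolynomial σ R) {D M : σ →₀ ℕ} (r : R)
    (hDM : D.degree = M.degree) (hne : D ≠ M) : coeff D (p * monomial M r) = 0 := by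
  classical
  rw [coeff_mul_monomial', if_neg]
  rintro hle
  obtain ⟨e, rfl⟩ := le_iff_exists_add'.mp hle
  simp_all [Finsupp.degree_eq_zero_iff]

lemma exists_eq_single_of_degree_eq_one {u : σ →₀ ℕ} (h : u.degree = 1) :
    ∃ s, u = single s 1 := by
  classical
  obtain ⟨s, hs⟩ := Multiset.card_eq_one.mp (u.card_toMultiset.trans h)
  exact ⟨s, by simpa using congrArg Multiset.toFinsupp hs⟩

lemma single_add_single_eq_iff {s t x y : σ} :
    single s 1 + single t 1 = single x 1 + single y 1 ↔ (s = x ∧ t = y) ∨ (s = y ∧ t = x) := by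
  simpa using Finsupp.single_add_single_eq_single_add_single (k := s) (l := t) (m := x) (n := y)
    (one_ne_zero' ℕ) (one_ne_zero' ℕ)

lemma single_two_eq_single_add_single (x : σ) : single x 2 = single x 1 + single x 1 := by
  rw [← Finsupp.single_add]

lemma eq_singles_of_coeff_mul_ne_zero {g h : MvPolynomial σ R} (hg : g.IsHomogeneous 1)
    (hh : h.IsHomogeneous 1) {x y : σ} {u v : σ →₀ ℕ} (huv : u + v = single x 1 + single y 1)
    (hne : coeff u g * coeff v h ≠ 0) :
    (u = single x 1 ∧ v = single y 1) ∨ (u = single y 1 ∧ v = single x 1) := by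
  obtain ⟨s, rfl⟩ := exists_eq_single_of_degree_eq_one
    (hg.degree_eq_of_coeff_ne_zero (left_ne_zero_of_mul hne))
  obtain ⟨t, rfl⟩ := exists_eq_single_of_degree_eq_one
    (hh.degree_eq_of_coeff_ne_zero (right_ne_zero_of_mul hne))
  rcases single_add_single_eq_iff.mp huv with ⟨rfl, rfl⟩ | ⟨rfl, rfl⟩ <;> simp

lemma coeff_single_add_single_mul {g h : MvPolynomial σ R} (hg : g.IsHomogeneous 1)
    (hh : h.IsHomogeneous 1) {x y : σ} (hxy : x ≠ y) :
    coeff (single x 1 + single y 1) (g * h) =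
      coeff (single x 1) g * coeff (single y 1) h +
        coeff (single y 1) g * coeff (single x 1) h := by
  classical
  rw [coeff_mul, Finset.sum_eq_add_of_mem (single x 1, single y 1) (single y 1, single x 1)
    (by simp) (by simp [add_comm]) (by simp [Finsupp.single_left_inj one_ne_zero, hxy])]
  rintro ⟨u, v⟩ huv ⟨hxy', hyx'⟩
  by_contra hne
  rcases eq_singles_of_coeff_mul_ne_zero hg hh
    (Finset.HasAntidiagonal.mem_antidiagonal.mp huv) hne with ⟨rfl, rfl⟩ | ⟨rfl, rfl⟩ <;> simp_all

lemma coeff_single_two_mul {g h : MvPolynomial σ R} (hg : g.IsHomogeneous 1)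
    (hh : h.IsHomogeneous 1) (x : σ) :
    coeff (single x 2) (g * h) = coeff (single x 1) g * coeff (single x 1) h := by
  classical
  rw [coeff_mul, Finset.sum_eq_single_of_mem (single x 1, single x 1)
    (by simp [single_two_eq_single_add_single])]
  rintro ⟨u, v⟩ huv hne'
  by_contra hne
  rw [single_two_eq_single_add_single] at huv
  rcases eq_singles_of_coeff_mul_ne_zero hg hh
    (Finset.HasAntidiagonal.mem_antidiagonal.mp huv) hne with ⟨rfl, rfl⟩ | ⟨rfl, rfl⟩ <;> simp_all

variable [NoZeroDivisors R] {g h : MvPolynomial σ R}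

lemma coeff_ne_zero_of_coeff_single_add_single_mul_ne_zero (hg : g.IsHomogeneous 1)
    (hh : h.IsHomogeneous 1) {x y : σ} (hxy : x ≠ y)
    (hne : coeff (single x 1 + single y 1) (g * h) ≠ 0) :
    (coeff (single x 1) g ≠ 0 ∧ coeff (single y 1) h ≠ 0) ∨
      (coeff (single y 1) g ≠ 0 ∧ coeff (single x 1) h ≠ 0) := by
  rw [coeff_single_add_single_mul hg hh hxy] at hne
  by_cases h₁ : coeff (single x 1) g * coeff (single y 1) h = 0
  · rw [h₁, zero_add] at hne
    exact Or.inr (mul_ne_zero_iff.mp hne)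
  · exact Or.inl (mul_ne_zero_iff.mp h₁)

lemma coeff_single_add_single_mul_ne_zero (hg : g.IsHomogeneous 1) (hh : h.IsHomogeneous 1)
    (hsq : ∀ z, coeff (single z 2) (g * h) = 0) {x y : σ} (hxy : x ≠ y)
    (hx : coeff (single x 1) g ≠ 0) (hy : coeff (single y 1) h ≠ 0) :
    coeff (single x 1 + single y 1) (g * h) ≠ 0 := by
  have hgy : coeff (single y 1) g = 0 := by
    simpa [coeff_single_two_mul hg hh, hy] using hsq y
  rw [coeff_single_add_single_mul hg hh hxy, hgy, zero_mul, add_zero]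
  exact mul_ne_zero hx hy

lemma coeff_single_add_single_mul_ne_zero_or (hg : g.IsHomogeneous 1) (hh : h.IsHomogeneous 1)
    (hsq : ∀ z, coeff (single z 2) (g * h) = 0) {a b c d : σ}
    (hab : coeff (single a 1 + single b 1) (g * h) ≠ 0)
    (hcd : coeff (single c 1 + single d 1) (g * h) ≠ 0) (hda : d ≠ a) (hdb : d ≠ b) :
    coeff (single a 1 + single d 1) (g * h) ≠ 0 ∨
      coeff (single b 1 + single d 1) (g * h) ≠ 0 := by
  have hne : ∀ {x y : σ}, coeff (single x 1 + single y 1) (g * h) ≠ 0 → x ≠ y := by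
    rintro x _ hxy rfl
    exact hxy (by rw [← single_two_eq_single_add_single]; exact hsq x)
  rcases coeff_ne_zero_of_coeff_single_add_single_mul_ne_zero hg hh (hne hab) hab with
    ⟨hga, hhb⟩ | ⟨hgb, hha⟩ <;>
  rcases coeff_ne_zero_of_coeff_single_add_single_mul_ne_zero hg hh (hne hcd) hcd with
    ⟨-, hhd⟩ | ⟨hgd, -⟩
  · exact Or.inl (coeff_single_add_single_mul_ne_zero hg hh hsq hda.symm hga hhd)
  · rw [add_comm (single b 1)]
    exact Or.inr (coeff_single_add_single_mul_ne_zero hg hh hsq hdb hgd hhb)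
  · exact Or.inr (coeff_single_add_single_mul_ne_zero hg hh hsq hdb.symm hgb hhd)
  · rw [add_comm (single a 1)]
    exact Or.inl (coeff_single_add_single_mul_ne_zero hg hh hsq hda hgd hha)

end Quadratic

end MvPolynomial

open Finsupp (single)

/-- `σᵏ u⁽ⁿ⁾ = y_a y_{a + 2ⁿ}` with `a = uIndex n k`; `uExp n k` is its exponent vector. -/
def uIndex (n k : ℕ) : ℕ := n + 2 ^ n - 1 + k

noncomputable def uExp (n k : ℕ) : ℕ →₀ ℕ :=
  single (uIndex n k) 1 + single (uIndex n k + 2 ^ n) 1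

lemma uIndex_succ (n k : ℕ) : uIndex (n + 1) k = uIndex n k + 2 ^ n + 1 := by
  have := Nat.one_le_two_pow (n := n)
  rw [uIndex, uIndex, pow_succ]
  omega

lemma uExp_succ (n k : ℕ) :
    uExp (n + 1) k =
      single (uIndex n k + 2 ^ n + 1) 1 + single (uIndex n k + 3 * 2 ^ n + 1) 1 := by
  rw [uExp, uIndex_succ, pow_succ]
  ring_nf

lemma degree_uExp (n k : ℕ) : (uExp n k).degree = 2 := by
  simp [uExp]

lemma eq_of_single_add_single_eq_uExp {s t n k : ℕ} (hst : s < t)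
    (h : single s 1 + single t 1 = uExp n k) : s = uIndex n k ∧ t = s + 2 ^ n := by
  have := Nat.two_pow_pos n
  rcases single_add_single_eq_iff.mp h with ⟨rfl, rfl⟩ | ⟨rfl, rfl⟩ <;> omega

lemma uExp_injective {n k n' k' : ℕ} (h : uExp n k = uExp n' k') : n = n' ∧ k = k' := by
  obtain ⟨h₁, h₂⟩ := eq_of_single_add_single_eq_uExp
    (Nat.lt_add_of_pos_right (Nat.two_pow_pos n)) h
  have hn : n = n' := Nat.pow_right_injective le_rfl (by omega : 2 ^ n = 2 ^ n')
  subst hn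
  exact ⟨rfl, by simp only [uIndex] at h₁; omega⟩

lemma single_two_ne_uExp (x n k : ℕ) : single x 2 ≠ uExp n k := by
  rw [single_two_eq_single_add_single]
  intro h
  have := Nat.two_pow_pos n
  rcases single_add_single_eq_iff.mp h with ⟨h₁, h₂⟩ | ⟨h₁, h₂⟩ <;> omega

section Shift

variable {K : Type*} [Field K] (σK : K →+* K)

lemma shift_iterate_X (k s : ℕ) : (⇑(shift σK))^[k] (X s) = X (s + k) := by
  induction k with
  | zero => rfl
  | succ k ih => rw [Function.iterate_succ_apply', ih, shift, eval₂Hom_X', add_assoc]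

lemma shift_iterate_uPoly (n k : ℕ) :
    (⇑(shift σK))^[k] (uPoly K n) = monomial (uExp n k) 1 := by
  have h : n + 2 ^ (n + 1) - 1 + k = uIndex n k + 2 ^ n := by
    have := Nat.one_le_two_pow (n := n)
    rw [uIndex, pow_succ]
    omega
  rw [uPoly, iterate_map_mul, shift_iterate_X, shift_iterate_X, h, uExp, X, X, monomial_mul,
    one_mul]
  rfl

lemma shift_iterate_APoly {i : ℕ} (hi : 1 ≤ i) (k : ℕ) :
    (⇑(shift σK))^[k] (APoly K i) =
      monomial (uExp (2 * i - 2) k) 1 + monomial (uExp (2 * i - 2 + 1) k) 1 := by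
  rw [APoly, iterate_map_add, shift_iterate_uPoly, shift_iterate_uPoly,
    show 2 * i - 1 = 2 * i - 2 + 1 by omega]

end Shift

section Ideal

variable {K : Type*} [Field K] (σK : K →+* K) {S : Set (MvPolynomial ℕ K)}
  (hS : ∀ a ∈ S, ∃ i, 1 ≤ i ∧ a = APoly K i)
include hS

lemma exists_uExp_of_mem_shifts {x : MvPolynomial ℕ K}
    (hx : x ∈ {x | ∃ a ∈ S, ∃ k : ℕ, x = (⇑(shift σK))^[k] a}) :
    ∃ n k, Even n ∧ x = monomial (uExp n k) 1 + monomial (uExp (n + 1) k) 1 := by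
  obtain ⟨a, ha, k, rfl⟩ := hx
  obtain ⟨i, hi, rfl⟩ := hS a ha
  exact ⟨2 * i - 2, k, ⟨i - 1, by omega⟩, shift_iterate_APoly σK hi k⟩

lemma coeff_eq_zero_of_mem_sigmaSpan {f : MvPolynomial ℕ K} (hf : f ∈ sigmaSpan (shift σK) S)
    {D : ℕ →₀ ℕ} (hD : D.degree = 2) (hne : ∀ n k, D ≠ uExp n k) : coeff D f = 0 := by
  obtain ⟨N, c, x, rfl⟩ := Submodule.mem_span_set'.mp hf
  rw [coeff_sum]
  refine Finset.sum_eq_zero fun j _ => ?_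
  obtain ⟨n, k, -, hx⟩ := exists_uExp_of_mem_shifts σK hS (x j).2
  rw [hx, smul_eq_mul, mul_add, coeff_add,
    coeff_mul_monomial_eq_zero_of_degree_eq _ _ (by rw [hD, degree_uExp]) (hne n k),
    coeff_mul_monomial_eq_zero_of_degree_eq _ _ (by rw [hD, degree_uExp]) (hne (n + 1) k),
    add_zero]

lemma coeff_uExp_succ_of_mem_sigmaSpan {f : MvPolynomial ℕ K} (hf : f ∈ sigmaSpan (shift σK) S)
    {n : ℕ} (hn : Even n) (k : ℕ) : coeff (uExp (n + 1) k) f = coeff (uExp n k) f := by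
  obtain ⟨N, c, x, rfl⟩ := Submodule.mem_span_set'.mp hf
  rw [coeff_sum, coeff_sum]
  refine Finset.sum_congr rfl fun j _ => ?_
  obtain ⟨n', k', hn', hx⟩ := exists_uExp_of_mem_shifts σK hS (x j).2
  have hself (D : ℕ →₀ ℕ) : coeff D (c j * monomial D 1) = coeff 0 (c j) := by
    simpa only [zero_add, mul_one] using coeff_mul_monomial 0 D 1 (c j)
  have hzero {n₁ k₁ n₂ k₂ : ℕ} (hne : ¬(n₁ = n₂ ∧ k₁ = k₂)) :
      coeff (uExp n₁ k₁) (c j * monomial (uExp n₂ k₂) 1) = 0 :=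
    coeff_mul_monomial_eq_zero_of_degree_eq _ _ (by rw [degree_uExp, degree_uExp])
      fun h => hne (uExp_injective h)
  obtain ⟨a, rfl⟩ := hn
  obtain ⟨b, rfl⟩ := hn'
  rw [hx, smul_eq_mul, mul_add, coeff_add, coeff_add]
  by_cases h : a = b ∧ k = k'
  · obtain ⟨rfl, rfl⟩ := h
    rw [hself, hself, hzero (by omega), hzero (by omega), zero_add, add_zero]
  · rw [hzero (by omega), hzero (by omega), hzero (by omega), hzero (by omega)]

end Ideal

lemma two_pow_ne_two_mul_add_one {n v : ℕ} (hv : v ≠ 0) : 2 ^ n ≠ 2 * v + 1 := by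
  cases n with
  | zero => omega
  | succ n => rw [pow_succ]; omega

section Irreducible

variable {K : Type*} [Field K] {f : MvPolynomial ℕ K}
  (hsupp : ∀ D, coeff D f ≠ 0 → ∃ n k, D = uExp n k)
  (hpair : ∀ n k, Even n → coeff (uExp (n + 1) k) f = coeff (uExp n k) f)

include hpair in
lemma coeff_uExp_two_mul_div_two (n k : ℕ) :
    coeff (uExp (2 * (n / 2)) k) f = coeff (uExp n k) f := by
  rcases Nat.even_or_odd' n with ⟨j, rfl | rfl⟩
  · rw [Nat.mul_div_cancel_left j two_pos]
  · rw [show 2 * ((2 * j + 1) / 2) = 2 * j by omega, hpair (2 * j) k (even_two_mul j)]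

include hsupp hpair in
lemma exists_even_coeff_uExp_ne_zero (hf0 : f ≠ 0) :
    ∃ n k, Even n ∧ coeff (uExp n k) f ≠ 0 ∧ (n = 0 → ∀ k', coeff (uExp 2 k') f = 0) := by
  by_cases hex : ∃ n k, 2 ≤ n ∧ coeff (uExp n k) f ≠ 0
  · obtain ⟨n, k, hn, hne⟩ := hex
    exact ⟨2 * (n / 2), k, even_two_mul _, by rwa [coeff_uExp_two_mul_div_two hpair],
      fun h => by omega⟩
  · obtain ⟨D, hD⟩ := exists_coeff_ne_zero hf0
    obtain ⟨n, k, rfl⟩ := hsupp D hD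
    refine ⟨2 * (n / 2), k, even_two_mul _, by rwa [coeff_uExp_two_mul_div_two hpair],
      fun _ k' => ?_⟩
    by_contra hne
    exact hex ⟨2, k', le_rfl, hne⟩

include hsupp in
lemma exists_two_pow_eq_of_coeff_ne_zero {s d : ℕ} (hd : 0 < d)
    (hne : coeff (single s 1 + single (s + d) 1) f ≠ 0) :
    ∃ n k, d = 2 ^ n ∧ single s 1 + single (s + d) 1 = uExp n k := by
  obtain ⟨n, k, h⟩ := hsupp _ hne
  exact ⟨n, k, by have := (eq_of_single_add_single_eq_uExp (by omega) h).2; omega, h⟩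

include hsupp hpair in
theorem irreducible_of_coeff_uExp (hhom : f.IsHomogeneous 2) (hf0 : f ≠ 0) : Irreducible f := by
  refine ⟨fun hu => ?_, fun g h hfgh => or_iff_not_imp_left.mpr fun hgu => ?_⟩
  · have := (isUnit_iff_totalDegree_of_isReduced.mp hu).2
    rw [hhom.totalDegree hf0] at this
    exact two_ne_zero this
  by_contra hhu
  obtain ⟨hg, hh⟩ := hhom.isHomogeneous_one_of_eq_mul hf0 hfgh hgu hhu
  subst hfgh
  have hsq (z : ℕ) : coeff (single z 2) (g * h) = 0 := by
    by_contra hne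
    obtain ⟨n, k, h⟩ := hsupp _ hne
    exact single_two_ne_uExp z n k h
  obtain ⟨n, k, hn, hne, hn0⟩ := exists_even_coeff_uExp_ne_zero hsupp hpair hf0
  have hcd := hpair n k hn ▸ hne
  rw [uExp_succ] at hcd
  set a := uIndex n k
  have hP := Nat.two_pow_pos n
  rcases coeff_single_add_single_mul_ne_zero_or hg hh hsq hne hcd (by omega) (by omega) with
    had | hbd
  · rw [show a + 3 * 2 ^ n + 1 = a + (3 * 2 ^ n + 1) by ring] at had
    obtain ⟨n', k', hgap, heq⟩ := exists_two_pow_eq_of_coeff_ne_zero hsupp (by omega) had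
    rcases Nat.eq_zero_or_pos n with rfl | hpos
    · obtain rfl : n' = 2 := Nat.pow_right_injective le_rfl (by simpa using hgap.symm)
      exact had (heq ▸ hn0 rfl k')
    · have h2 : 2 ^ n = 2 * 2 ^ (n - 1) := by rw [← pow_succ']; congr 1; omega
      exact two_pow_ne_two_mul_add_one (n := n') (v := 3 * 2 ^ (n - 1)) (by positivity)
        (by omega)
  · rw [show a + 3 * 2 ^ n + 1 = a + 2 ^ n + (2 * 2 ^ n + 1) by ring] at hbd
    obtain ⟨n', k', hgap, -⟩ := exists_two_pow_eq_of_coeff_ne_zero hsupp (by omega) hbd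
    exact two_pow_ne_two_mul_add_one (n := n') (v := 2 ^ n) (by positivity) hgap.symm

end Irreducible

theorem stmt_10_general {K : Type*} [Field K] (σK : K →+* K) (m : ℕ)
    (f : MvPolynomial ℕ K)
    (hf : f ∈ sigmaSpan (shift σK) {g | ∃ i, 1 ≤ i ∧ i ≤ m ∧ g = APoly K i})
    (hhom : f.IsHomogeneous 2) (hf0 : f ≠ 0) :
    Irreducible f := by
  have hS : ∀ a ∈ {g | ∃ i, 1 ≤ i ∧ i ≤ m ∧ g = APoly K i}, ∃ i, 1 ≤ i ∧ a = APoly K i :=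
    fun a ⟨i, hi, _, ha⟩ => ⟨i, hi, ha⟩
  refine irreducible_of_coeff_uExp (fun D hD => ?_)
    (fun n k hn => coeff_uExp_succ_of_mem_sigmaSpan σK hS hf hn k) hhom hf0
  by_contra hne
  exact hD (coeff_eq_zero_of_mem_sigmaSpan σK hS hf (hhom.degree_eq_of_coeff_ne_zero hD)
    fun n k hDnk => hne ⟨n, k, hDnk⟩)

theorem stmt_10 {K : Type*} [Field K] (σK : K →+* K) (m : ℕ) (hm : 1 ≤ m)
    (f : MvPolynomial ℕ K)
    (hf : f ∈ sigmaSpan (shift σK) {g | ∃ i, 1 ≤ i ∧ i ≤ m ∧ g = APoly K i})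
    (hhom : f.IsHomogeneous 2) (hf0 : f ≠ 0) :
    Irreducible f :=
  stmt_10_general σK m f hf hhom hf0
end

section
/- Every mixed difference ideal of a difference ring R is complete, i.e., if I is mixed and a product of powers of transforms σ^{k_1}(a)^{d_1}···σ^{k_m}(a)^{d_m} lies in I, then some power of some transform σ^k(a) lies in I. -/
/-! Mixedness lets one replace, inside a product lying in `I`, any factor `b` by `σ b`.
Hence every transform `σ^[k i] a` in the product can be pushed up to the common transform
`σ^[K] a` with `K = max k i`, and the product becomes the single power `(σ^[K] a) ^ ∑ d i`. -/

namespace IsMixedIdeal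

variable {R : Type*} [CommRing R] {σ : R →+* R} {I : Ideal R}

theorem mul_pow_map_mem (hI : IsMixedIdeal σ I) {x b : R} {n : ℕ} (h : x * b ^ n ∈ I) :
    x * σ b ^ n ∈ I := by
  induction n generalizing x with
  | zero => simpa using h
  | succ n ih =>
    have hσb : x * b ^ n * σ b ∈ I := hI.2 _ _ (by rwa [mul_assoc, ← pow_succ])
    rw [pow_succ', ← mul_assoc]
    exact ih (by rwa [mul_right_comm] at hσb)

theorem mul_pow_iterate_mem (hI : IsMixedIdeal σ I) {x b : R} {n : ℕ} (t : ℕ)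
    (h : x * b ^ n ∈ I) : x * ((⇑σ)^[t] b) ^ n ∈ I := by
  induction t with
  | zero => simpa using h
  | succ t ih => simpa only [Function.iterate_succ_apply'] using hI.mul_pow_map_mem ih

theorem mul_prod_pow_iterate_mem (hI : IsMixedIdeal σ I) {ι : Type*} (s : Finset ι)
    (b : ι → R) (t d : ι → ℕ) {x : R} (h : x * ∏ i ∈ s, b i ^ d i ∈ I) :
    x * ∏ i ∈ s, ((⇑σ)^[t i] (b i)) ^ d i ∈ I := by
  classical
  induction s using Finset.induction generalizing x with
  | empty => simpa using h
  | insert j s hj ih =>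
    rw [Finset.prod_insert hj, mul_left_comm] at h ⊢
    have hσj : ((⇑σ)^[t j] (b j)) ^ d j * (x * ∏ i ∈ s, b i ^ d i) ∈ I := by
      rw [mul_comm]
      exact hI.mul_pow_iterate_mem (t j) (by rwa [mul_comm])
    rw [← mul_assoc] at hσj ⊢
    exact ih hσj

end IsMixedIdeal

theorem stmt_15_general {R : Type*} [CommRing R] (σ : R →+* R)
    (I : Ideal R) (hI : IsMixedIdeal σ I) (a : R) (m : ℕ) (k d : Fin (m + 1) → ℕ)
    (h : (∏ i, ((⇑σ)^[k i] a) ^ d i) ∈ I) :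
    ∃ (k' d' : ℕ), ((⇑σ)^[k'] a) ^ d' ∈ I := by
  set K := Finset.univ.sup k
  have hshift : ∀ i, (⇑σ)^[K - k i] ((⇑σ)^[k i] a) = (⇑σ)^[K] a := fun i => by
    rw [← Function.iterate_add_apply, Nat.sub_add_cancel (Finset.le_sup (Finset.mem_univ i))]
  have hK := hI.mul_prod_pow_iterate_mem Finset.univ _ (fun i => K - k i) d
    (x := 1) (by rwa [one_mul])
  refine ⟨K, ∑ i, d i, ?_⟩
  simpa only [one_mul, hshift, Finset.prod_pow_eq_pow_sum] using hK

theorem stmt_15 {R : Type*} [CommRing R] (σ : R →+* R) (hσ : Function.Injective σ)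
    (I : Ideal R) (hI : IsMixedIdeal σ I) (a : R) (m : ℕ) (k d : Fin (m + 1) → ℕ)
    (hd : ∀ i, 1 ≤ d i) (h : (∏ i, ((⇑σ)^[k i] a) ^ d i) ∈ I) :
    ∃ (k' d' : ℕ), ((⇑σ)^[k'] a) ^ d' ∈ I :=
  stmt_15_general σ I hI a m k d h
end

section
/- The ring of difference polynomials K{y} over an ordinary difference field K does not satisfy the ascending chain condition for complete difference ideals. -/
open MvPolynomial

/-- A σ-ideal is complete if whenever a product of positive powers of transforms of `a`
lies in `I`, some power of some transform of `a` lies in `I`. -/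
def IsCompleteIdeal {R : Type*} [CommRing R] (σ : R →+* R) (I : Ideal R) : Prop :=
  IsSigmaIdeal σ I ∧ ∀ (a : R) (m : ℕ) (k d : Fin (m + 1) → ℕ), (∀ i, 1 ≤ d i) →
    (∏ i, ((⇑σ)^[k i] a) ^ d i) ∈ I → ∃ (k' d' : ℕ), ((⇑σ)^[k'] a) ^ d' ∈ I

/-!
Let `Iₙ = (y)³ + (yᵢ y_(i+k) : 1 ≤ k ≤ n)`, where `(y) = (y₀, y₁, …)`. Both summands are
generated by monomials whose exponents are stable under the index shift, so `Iₙ` is a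
σ-ideal; and `y₀ y_(n+1)` is a monomial lying in `I_(n+1)` but divisible by no generator of
`Iₙ`, so the chain is strictly increasing. Completeness comes from `(y)³ ⊆ Iₙ ⊆ (y)`:
the ideal `(y)` is the kernel of the constant coefficient, hence prime, and since `σ` is
injective on `K`, `σᵏ(a) ∈ (y)` forces `a ∈ (y)`. So a product of transforms of `a` in `Iₙ`
puts `a` in `(y)`, and then `a³ ∈ Iₙ`.
-/

namespace MvPolynomial

section idealOfVars

variable {σ R : Type*}

theorem mem_idealOfVars_iff [CommSemiring R] {p : MvPolynomial σ R} :
    p ∈ idealOfVars σ R ↔ constantCoeff p = 0 := by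
  rw [← pow_one (idealOfVars σ R), mem_pow_idealOfVars_iff']
  simp [Finsupp.degree_eq_zero_iff, constantCoeff_eq]

theorem isPrime_idealOfVars [CommRing R] [IsDomain R] : (idealOfVars σ R).IsPrime := by
  have : idealOfVars σ R = RingHom.ker constantCoeff := Ideal.ext fun _ => mem_idealOfVars_iff
  exact this ▸ RingHom.ker_isPrime _

end idealOfVars

section shift

variable {K : Type*} [Field K] (σK : K →+* K)

theorem shift_eq_rename_comp_map :
    shift σK = (rename (· + 1)).toRingHom.comp (map σK) := by
  ext <;> simp [shift]

theorem shift_monomial_one (s : ℕ →₀ ℕ) :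
    shift σK (monomial s 1) = monomial (s.mapDomain (· + 1)) 1 := by
  simp [shift_eq_rename_comp_map, rename_monomial]

theorem shift_iterate_mem_idealOfVars_iff (k : ℕ) {p : MvPolynomial ℕ K} :
    (⇑(shift σK))^[k] p ∈ idealOfVars ℕ K ↔ p ∈ idealOfVars ℕ K := by
  induction k generalizing p with
  | zero => rfl
  | succ k ih =>
    rw [Function.iterate_succ_apply, ih, mem_idealOfVars_iff, mem_idealOfVars_iff,
      shift_eq_rename_comp_map]
    simp [constantCoeff_rename, constantCoeff_map]

theorem isSigmaIdeal_span_monomial {S : Set (ℕ →₀ ℕ)}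
    (hS : ∀ s ∈ S, s.mapDomain (· + 1) ∈ S) :
    IsSigmaIdeal (shift σK) (Ideal.span ((monomial · (1 : K)) '' S)) := by
  suffices h : Ideal.span ((monomial · (1 : K)) '' S) ≤
      (Ideal.span ((monomial · 1) '' S)).comap (shift σK) from fun _ ha => h ha
  rw [Ideal.span_le]
  rintro _ ⟨s, hs, rfl⟩
  rw [SetLike.mem_coe, Ideal.mem_comap, shift_monomial_one]
  exact Ideal.subset_span ⟨_, hS s hs, rfl⟩

theorem isCompleteIdeal_of_pow_idealOfVars_le {I : Ideal (MvPolynomial ℕ K)} {d : ℕ}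
    (hσ : IsSigmaIdeal (shift σK) I) (hpow : idealOfVars ℕ K ^ d ≤ I)
    (hI : I ≤ idealOfVars ℕ K) : IsCompleteIdeal (shift σK) I := by
  refine ⟨hσ, fun a m k e _ hprod => ⟨0, d, hpow (Ideal.pow_mem_pow ?_ d)⟩⟩
  obtain ⟨i, -, hi⟩ := isPrime_idealOfVars.prod_mem_iff.mp (hI hprod)
  exact (shift_iterate_mem_idealOfVars_iff σK _).mp (isPrime_idealOfVars.mem_of_pow_mem _ hi)

end shift

section chain

open Finsupp in
def chainExponents (n : ℕ) : Set (ℕ →₀ ℕ) :=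
  {s | s.degree = 3 ∨ ∃ i k, 1 ≤ k ∧ k ≤ n ∧ s = single i 1 + single (i + k) 1}

variable (R : Type*) [CommSemiring R]

noncomputable def chainIdeal (n : ℕ) : Ideal (MvPolynomial ℕ R) :=
  Ideal.span ((monomial · 1) '' chainExponents n)

variable {R}

theorem mapDomain_mem_chainExponents {n : ℕ} {s : ℕ →₀ ℕ} (hs : s ∈ chainExponents n) :
    s.mapDomain (· + 1) ∈ chainExponents n := by
  rcases hs with hs | ⟨i, k, hk, hkn, rfl⟩
  · exact Or.inl ((Finsupp.degree_mapDomain _ _).trans hs)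
  · refine Or.inr ⟨i + 1, k, hk, hkn, ?_⟩
    simp [Finsupp.mapDomain_add, Finsupp.mapDomain_single, add_right_comm]

theorem chainExponents_mono {m n : ℕ} (h : m ≤ n) : chainExponents m ⊆ chainExponents n := by
  rintro s (hs | ⟨i, k, hk, hkm, rfl⟩)
  · exact Or.inl hs
  · exact Or.inr ⟨i, k, hk, hkm.trans h, rfl⟩

theorem pow_idealOfVars_le_chainIdeal (n : ℕ) : idealOfVars ℕ R ^ 3 ≤ chainIdeal R n := by
  rw [pow_idealOfVars_eq_span]
  exact Ideal.span_mono (Set.image_mono fun _ => Or.inl)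

theorem chainIdeal_le_idealOfVars [Nontrivial R] (n : ℕ) :
    chainIdeal R n ≤ idealOfVars ℕ R := by
  rw [chainIdeal, Ideal.span_le]
  rintro _ ⟨s, hs, rfl⟩
  rw [SetLike.mem_coe, ← pow_one (idealOfVars ℕ R),
    monomial_mem_pow_idealOfVars_iff _ _ one_ne_zero]
  rcases hs with hs | ⟨i, k, -, -, rfl⟩
  · simp [hs]
  · simp

theorem not_le_of_mem_chainExponents {n : ℕ} {s : ℕ →₀ ℕ} (hs : s ∈ chainExponents n) :
    ¬ s ≤ Finsupp.single 0 1 + Finsupp.single (n + 1) 1 := by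
  intro hle
  rcases hs with hs | ⟨i, k, hk, hkn, rfl⟩
  · have := Finsupp.degree_mono hle
    simp [hs] at this
  · have hi := hle i
    have hik := hle (i + k)
    simp only [Finsupp.coe_add, Pi.add_apply, Finsupp.single_apply] at hi hik
    split_ifs at hi hik <;> omega

theorem chainIdeal_lt_succ [Nontrivial R] (n : ℕ) : chainIdeal R n < chainIdeal R (n + 1) := by
  set e := Finsupp.single 0 1 + Finsupp.single (n + 1) 1
  refine SetLike.lt_iff_le_and_exists.mpr ⟨Ideal.span_mono (Set.image_mono
    (chainExponents_mono n.le_succ)), monomial e 1, Ideal.subset_span ⟨e, ?_, rfl⟩, ?_⟩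
  · exact Or.inr ⟨0, n + 1, n.succ_pos, le_rfl, by simp [e]⟩
  · classical
    rw [chainIdeal, mem_ideal_span_monomial_image, support_monomial, if_neg one_ne_zero]
    simp only [Finset.mem_singleton, forall_eq, not_exists, not_and]
    exact fun _ => not_le_of_mem_chainExponents

end chain

end MvPolynomial

/-- `K{y}` does not satisfy the ascending chain condition for complete difference ideals:
there is a strictly ascending chain of complete difference ideals. -/
theorem stmt_16 {K : Type*} [Field K] (σK : K →+* K) :
    ∃ I : ℕ → Ideal (MvPolynomial ℕ K),
      (∀ n, IsCompleteIdeal (shift σK) (I n)) ∧ ∀ n, I n < I (n + 1) :=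
  ⟨chainIdeal K, fun n => isCompleteIdeal_of_pow_idealOfVars_le σK
      (isSigmaIdeal_span_monomial σK fun _ => mapDomain_mem_chainExponents)
      (pow_idealOfVars_le_chainIdeal n) (chainIdeal_le_idealOfVars n),
    chainIdeal_lt_succ⟩
end
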